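/- arXiv:2401.09996 — 4 statements merged into one kernel-verified Lean document; each statement's English description precedes it below -/
import Mathlib

section
/- Nikolskii-type inequality for trigonometric polynomials on compact abelian groups: let G be a compact abelian group with normalized Haar measure, 1 ≤ p ≤ 2 and p ≤ q ≤ ∞. Then for every trigonometric polynomial f = Σ_{γ ∈ A} c_γ γ, where A is a finite set of characters of G, one has ‖f‖_q ≤ (#A)^(1/p − 1/q) ‖f‖_p. -/
open scoped ENNReal NNReal
open MeasureTheory Finset ComplexConjugate

section Aux

variable {G : Type*} [CommGroup G] [TopologicalSpace G]
    [IsTopologicalGroup G] [CompactSpace G] [MeasurableSpace G] [BorelSpace G]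
    (μ : Measure G) [μ.IsHaarMeasure] [IsProbabilityMeasure μ]

private lemma contIntegrable {h : G → ℂ} (hc : Continuous h) : Integrable h μ :=
  hc.integrable_of_hasCompactSupport ((isClosed_tsupport _).isCompact)

private lemma charInt (γ : ContinuousMonoidHom G Circle) (hγ : γ ≠ 1) :
    ∫ g, (γ g : ℂ) ∂μ = 0 := by
  obtain ⟨g₀, hg₀⟩ : ∃ g₀, γ g₀ ≠ 1 := by
    by_contra h
    push_neg at h
    exact hγ (ContinuousMonoidHom.ext fun g => (h g).trans rfl)
  have key : ∫ g, ((γ (g₀ * g) : ℂ)) ∂μ = ∫ g, (γ g : ℂ) ∂μ :=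
    integral_mul_left_eq_self (fun g => (γ g : ℂ)) g₀
  simp only [map_mul, Circle.coe_mul, integral_const_mul] at key
  have h2 : ((γ g₀ : ℂ) - 1) * ∫ g, (γ g : ℂ) ∂μ = 0 := by
    rw [sub_mul, one_mul, key, sub_self]
  rcases mul_eq_zero.1 h2 with h | h
  · refine absurd (Subtype.ext ?_) hg₀
    have : (γ g₀ : ℂ) = 1 := by linear_combination h
    simpa using this
  · exact h

private lemma charOrthSelf (γ : ContinuousMonoidHom G Circle) :
    ∫ g, (γ g : ℂ) * conj ((γ g : ℂ)) ∂μ = 1 := by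
  have : ∀ g : G, (γ g : ℂ) * conj ((γ g : ℂ)) = 1 := by
    intro g
    rw [Complex.mul_conj]
    simp
  simp only [this]
  simp

private lemma charOrthNe (γ δ : ContinuousMonoidHom G Circle) (h : γ ≠ δ) :
    ∫ g, (γ g : ℂ) * conj ((δ g : ℂ)) ∂μ = 0 := by
  have hrw : ∀ g : G, (γ g : ℂ) * conj ((δ g : ℂ)) = ((γ * δ⁻¹) g : ℂ) := by
    intro g
    rw [← Circle.coe_inv_eq_conj]
    show _ = ((γ g * (δ g)⁻¹ : Circle) : ℂ)
    push_cast
    ring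
  simp only [hrw]
  exact charInt μ _ (by simpa [mul_inv_eq_one] using h)

private lemma parseval (A : Finset (ContinuousMonoidHom G Circle))
    (c : ContinuousMonoidHom G Circle → ℂ) :
    ∫ g, ‖∑ γ ∈ A, c γ * (γ g : ℂ)‖ ^ 2 ∂μ = ∑ γ ∈ A, ‖c γ‖ ^ 2 := by
  have hint : ∀ (γ δ : ContinuousMonoidHom G Circle),
      Integrable (fun g => (c γ * conj (c δ)) * ((γ g : ℂ) * conj ((δ g : ℂ)))) μ := by
    intro γ δ
    exact (contIntegrable μ ((γ.continuous.subtype_val.mul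
      (Complex.continuous_conj.comp δ.continuous.subtype_val)))).const_mul _
  have expand : ∀ g : G, ((‖∑ γ ∈ A, c γ * (γ g : ℂ)‖ ^ 2 : ℝ) : ℂ) =
      ∑ γ ∈ A, ∑ δ ∈ A, (c γ * conj (c δ)) * ((γ g : ℂ) * conj ((δ g : ℂ))) := by
    intro g
    have h1 : ((‖∑ γ ∈ A, c γ * (γ g : ℂ)‖ ^ 2 : ℝ) : ℂ)
        = (∑ γ ∈ A, c γ * (γ g : ℂ)) * conj (∑ δ ∈ A, c δ * (δ g : ℂ)) := by
      rw [Complex.mul_conj]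
      norm_cast
      rw [Complex.normSq_eq_norm_sq]
    rw [h1, map_sum, Finset.sum_mul_sum]
    refine Finset.sum_congr rfl fun γ _ => Finset.sum_congr rfl fun δ _ => ?_
    simp only [map_mul]
    ring
  have h2 : (∫ g, ((‖∑ γ ∈ A, c γ * (γ g : ℂ)‖ ^ 2 : ℝ) : ℂ) ∂μ)
      = ∑ γ ∈ A, ∑ δ ∈ A, (c γ * conj (c δ)) * ∫ g, (γ g : ℂ) * conj ((δ g : ℂ)) ∂μ := by
    simp only [expand]
    rw [integral_finset_sum _ (fun γ _ => integrable_finset_sum _ (fun δ _ => hint γ δ))]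
    refine Finset.sum_congr rfl fun γ _ => ?_
    rw [integral_finset_sum _ (fun δ _ => hint γ δ)]
    exact Finset.sum_congr rfl fun δ _ => integral_const_mul _ _
  have h3 : ∑ γ ∈ A, ∑ δ ∈ A, (c γ * conj (c δ)) * (∫ g, (γ g : ℂ) * conj ((δ g : ℂ)) ∂μ)
      = ((∑ γ ∈ A, ‖c γ‖ ^ 2 : ℝ) : ℂ) := by
    push_cast
    refine Finset.sum_congr rfl fun γ hγ => ?_
    rw [Finset.sum_eq_single γ]
    · rw [charOrthSelf, mul_one, Complex.mul_conj]
      norm_cast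
      rw [Complex.normSq_eq_norm_sq]
    · intro δ hδ hne
      rw [charOrthNe μ γ δ (fun hh => hne hh.symm), mul_zero]
    · exact fun h => absurd hγ h
  have h4 := h2.trans h3
  have h5 : ∫ g, ((‖∑ γ ∈ A, c γ * (γ g : ℂ)‖ ^ 2 : ℝ) : ℂ) ∂μ
      = ((∫ g, ‖∑ γ ∈ A, c γ * (γ g : ℂ)‖ ^ 2 ∂μ : ℝ) : ℂ) := integral_ofReal
  exact Complex.ofReal_injective (h5.symm.trans h4)

end Aux

section Aux2

variable {G : Type*} [CommGroup G] [TopologicalSpace G]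
    [IsTopologicalGroup G] [CompactSpace G] [MeasurableSpace G] [BorelSpace G]
    (μ : Measure G) [μ.IsHaarMeasure] [IsProbabilityMeasure μ]

private lemma lintegralRpowLe (f : G → ℂ) (hM : eLpNormEssSup f μ ≠ ∞)
    {s r : ℝ} (hs : 0 ≤ s) (hsr : s ≤ r) :
    ∫⁻ g, (‖f g‖₊ : ℝ≥0∞) ^ r ∂μ ≤
      eLpNormEssSup f μ ^ (r - s) * ∫⁻ g, (‖f g‖₊ : ℝ≥0∞) ^ s ∂μ := by
  rw [← lintegral_const_mul' _ _ (ENNReal.rpow_ne_top_of_nonneg (by linarith) hM)]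
  refine lintegral_mono_ae ?_
  filter_upwards [ae_le_eLpNormEssSup (f := f) (μ := μ)] with x hx
  calc (‖f x‖₊ : ℝ≥0∞) ^ r = (‖f x‖₊ : ℝ≥0∞) ^ (r - s) * (‖f x‖₊ : ℝ≥0∞) ^ s := by
        rw [← ENNReal.rpow_add_of_nonneg _ _ (by linarith) hs, sub_add_cancel]
    _ ≤ eLpNormEssSup f μ ^ (r - s) * (‖f x‖₊ : ℝ≥0∞) ^ s :=
        mul_le_mul_left (ENNReal.rpow_le_rpow hx (by linarith)) _

private lemma supBound (p : ℝ≥0∞) (hp1 : 1 ≤ p) (hp2 : p ≤ 2)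
    (A : Finset (ContinuousMonoidHom G Circle)) (c : ContinuousMonoidHom G Circle → ℂ) :
    eLpNormEssSup (fun g => ∑ γ ∈ A, c γ * (γ g : ℂ)) μ ≤
      (A.card : ℝ≥0∞) ^ (1 / p.toReal) *
        eLpNorm (fun g => ∑ γ ∈ A, c γ * (γ g : ℂ)) p μ := by
  set f : G → ℂ := fun g => ∑ γ ∈ A, c γ * (γ g : ℂ) with hfdef
  have hfc : Continuous f :=
    continuous_finset_sum _ fun γ _ => continuous_const.mul γ.continuous.subtype_val
  have hpne : p ≠ ∞ := (lt_of_le_of_lt hp2 (by norm_num)).ne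
  have hp0 : p ≠ 0 := fun h => by simp [h] at hp1
  set pr := p.toReal with hprdef
  have hpr1 : 1 ≤ pr := by
    rw [hprdef, ← ENNReal.toReal_one]
    exact ENNReal.toReal_mono hpne hp1
  have hpr2 : pr ≤ 2 := by
    have h := ENNReal.toReal_mono (by norm_num : (2 : ℝ≥0∞) ≠ ∞) hp2
    simpa using h
  have hprpos : (0 : ℝ) < pr := lt_of_lt_of_le one_pos hpr1
  set M := eLpNormEssSup f μ with hMdef
  set N := A.card with hNdef
  -- step a
  have hbdd : ∀ g, ‖f g‖ ≤ ∑ γ ∈ A, ‖c γ‖ := by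
    intro g
    refine (norm_sum_le _ _).trans ?_
    refine Finset.sum_le_sum fun γ _ => ?_
    simp [Circle.norm_coe]
  have ha : M ≤ ENNReal.ofReal (∑ γ ∈ A, ‖c γ‖) :=
    eLpNormEssSup_le_of_ae_bound (ae_of_all _ hbdd)
  have hMne : M ≠ ∞ := (lt_of_le_of_lt ha ENNReal.ofReal_lt_top).ne
  -- step c : L2 = ofReal (∑ ‖c γ‖ ^ 2)
  have hc2 : ∫⁻ g, (‖f g‖₊ : ℝ≥0∞) ^ (2 : ℝ) ∂μ = ENNReal.ofReal (∑ γ ∈ A, ‖c γ‖ ^ 2) := by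
    rw [← parseval μ A c]
    change ∫⁻ g, (‖f g‖₊ : ℝ≥0∞) ^ (2 : ℝ) ∂μ = ENNReal.ofReal (∫ g, ‖f g‖ ^ 2 ∂μ)
    rw [MeasureTheory.ofReal_integral_eq_lintegral_ofReal (f := fun g => ‖f g‖ ^ 2)
      (((hfc.norm).pow 2).integrable_of_hasCompactSupport ((isClosed_tsupport _).isCompact))
      (ae_of_all _ fun g => sq_nonneg _)]
    refine lintegral_congr fun g => ?_
    rw [ENNReal.ofReal_pow (norm_nonneg _), ofReal_norm,
      ← ENNReal.rpow_natCast]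
    norm_num
    rfl
  -- step b : M ^ 2 ≤ N * L2
  have hb : M ^ (2 : ℝ) ≤ (N : ℝ≥0∞) * ∫⁻ g, (‖f g‖₊ : ℝ≥0∞) ^ (2 : ℝ) ∂μ := by
    rw [hc2]
    calc M ^ (2 : ℝ) ≤ ENNReal.ofReal (∑ γ ∈ A, ‖c γ‖) ^ (2 : ℝ) :=
          ENNReal.rpow_le_rpow ha (by norm_num)
      _ = ENNReal.ofReal ((∑ γ ∈ A, ‖c γ‖) ^ 2) := by
          rw [show ((2 : ℝ)) = ((2 : ℕ) : ℝ) by norm_num, ENNReal.rpow_natCast,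
            ENNReal.ofReal_pow (by positivity)]
      _ ≤ ENNReal.ofReal ((N : ℝ) * ∑ γ ∈ A, ‖c γ‖ ^ 2) := by
          exact ENNReal.ofReal_le_ofReal (sq_sum_le_card_mul_sum_sq)
      _ = (N : ℝ≥0∞) * ENNReal.ofReal (∑ γ ∈ A, ‖c γ‖ ^ 2) := by
          rw [ENNReal.ofReal_mul (by positivity)]
          simp
  -- step d : L2 ≤ M ^ (2 - pr) * Lp
  have hd := lintegralRpowLe μ f hMne (le_of_lt hprpos) hpr2
  -- combine : M ^ 2 ≤ N * M^(2-pr) * Lp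
  set Lp := ∫⁻ g, (‖f g‖₊ : ℝ≥0∞) ^ pr ∂μ with hLpdef
  have hcomb : M ^ (2 : ℝ) ≤ (N : ℝ≥0∞) * (M ^ (2 - pr) * Lp) :=
    hb.trans (mul_le_mul_right hd _)
  -- cancel
  rcases eq_or_ne M 0 with hM0 | hM0
  · rw [hM0]
    exact zero_le
  have hMrp0 : M ^ (2 - pr) ≠ 0 :=
    (ENNReal.rpow_pos (lt_of_le_of_ne zero_le (Ne.symm hM0)) hMne).ne'
  have hMrpne : M ^ (2 - pr) ≠ ∞ := ENNReal.rpow_ne_top_of_nonneg (by linarith) hMne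
  have hcancel : M ^ pr ≤ (N : ℝ≥0∞) * Lp := by
    have h1 : M ^ pr * M ^ (2 - pr) ≤ ((N : ℝ≥0∞) * Lp) * M ^ (2 - pr) := by
      rw [← ENNReal.rpow_add_of_nonneg _ _ (le_of_lt hprpos) (by linarith)]
      calc M ^ (pr + (2 - pr)) = M ^ (2 : ℝ) := by norm_num
        _ ≤ (N : ℝ≥0∞) * (M ^ (2 - pr) * Lp) := hcomb
        _ = ((N : ℝ≥0∞) * Lp) * M ^ (2 - pr) := by ring
    exact (ENNReal.mul_le_mul_iff_left hMrp0 hMrpne).mp h1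
  -- conclude
  have hfinal : M ≤ ((N : ℝ≥0∞) * Lp) ^ (1 / pr) := by
    have := ENNReal.rpow_le_rpow hcancel (le_of_lt (by positivity : (0:ℝ) < 1 / pr))
    rwa [← ENNReal.rpow_mul, mul_one_div, div_self (ne_of_gt hprpos), ENNReal.rpow_one] at this
  refine hfinal.trans ?_
  rw [ENNReal.mul_rpow_of_nonneg _ _ (by positivity),
    eLpNorm_eq_lintegral_rpow_enorm_toReal hp0 hpne]
  exact le_rfl

end Aux2

/-- Nikolskii-type inequality for trigonometric polynomials on compact abelian groups. -/
theorem nikolskii_compact_abelian {G : Type*} [CommGroup G] [TopologicalSpace G]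
    [IsTopologicalGroup G] [CompactSpace G] [MeasurableSpace G] [BorelSpace G]
    (μ : Measure G) [μ.IsHaarMeasure] [IsProbabilityMeasure μ]
    (p q : ℝ≥0∞) (hp1 : 1 ≤ p) (hp2 : p ≤ 2) (hpq : p ≤ q)
    (A : Finset (ContinuousMonoidHom G Circle)) (c : ContinuousMonoidHom G Circle → ℂ) :
    eLpNorm (fun g => ∑ γ ∈ A, c γ * (γ g : ℂ)) q μ ≤
      (A.card : ℝ≥0∞) ^ ((1 / p - 1 / q).toReal) *
        eLpNorm (fun g => ∑ γ ∈ A, c γ * (γ g : ℂ)) p μ := by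
  set f : G → ℂ := fun g => ∑ γ ∈ A, c γ * (γ g : ℂ) with hfdef
  have hfc : Continuous f :=
    continuous_finset_sum _ fun γ _ => continuous_const.mul γ.continuous.subtype_val
  have hpne : p ≠ ∞ := (lt_of_le_of_lt hp2 (by norm_num)).ne
  have hp0 : p ≠ 0 := fun h => by simp [h] at hp1
  have hq0 : q ≠ 0 := (lt_of_lt_of_le zero_lt_one (hp1.trans hpq)).ne'
  set pr := p.toReal with hprdef
  have hpr1 : 1 ≤ pr := by
    rw [hprdef, ← ENNReal.toReal_one]
    exact ENNReal.toReal_mono hpne hp1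
  have hprpos : (0 : ℝ) < pr := lt_of_lt_of_le one_pos hpr1
  rcases eq_or_ne q ∞ with hq | hq
  · subst hq
    have hsub : (1 / p - 1 / ∞) = 1 / p := by simp
    rw [hsub, ENNReal.toReal_div, ENNReal.toReal_one, eLpNorm_exponent_top]
    exact supBound μ p hp1 hp2 A c
  · set qr := q.toReal with hqrdef
    have hqrpr : pr ≤ qr := ENNReal.toReal_mono hq hpq
    have hqrpos : (0 : ℝ) < qr := lt_of_lt_of_le hprpos hqrpr
    have hbdd : ∀ g, ‖f g‖ ≤ ∑ γ ∈ A, ‖c γ‖ := by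
      intro g
      refine (norm_sum_le _ _).trans (Finset.sum_le_sum fun γ _ => ?_)
      simp [Circle.norm_coe]
    have hMne : eLpNormEssSup f μ ≠ ∞ :=
      (lt_of_le_of_lt (eLpNormEssSup_le_of_ae_bound (ae_of_all _ hbdd))
        ENNReal.ofReal_lt_top).ne
    set M := eLpNormEssSup f μ with hMdef
    set Fp := eLpNorm f p μ with hFpdef
    set N := (A.card : ℝ≥0∞) with hNdef
    have hsup : M ≤ N ^ (1 / pr) * Fp := supBound μ p hp1 hp2 A c
    have hLp : (∫⁻ g, (‖f g‖₊ : ℝ≥0∞) ^ pr ∂μ) = Fp ^ pr := by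
      rw [hFpdef, eLpNorm_eq_lintegral_rpow_enorm_toReal hp0 hpne, one_div,
        ENNReal.rpow_inv_rpow (ne_of_gt hprpos)]
      rfl
    have hexp : (1 / p - 1 / q).toReal = 1 / pr - 1 / qr := by
      rw [ENNReal.toReal_sub_of_le (by
          rw [one_div, one_div]
          exact ENNReal.inv_le_inv.mpr hpq)
        (by simp [hp0]), ENNReal.toReal_div, ENNReal.toReal_div]
      simp
      rfl
    have hkey : eLpNorm f q μ ^ qr ≤ (N ^ ((1 / p - 1 / q).toReal)) ^ qr * Fp ^ qr := by
      rw [eLpNorm_eq_lintegral_rpow_enorm_toReal hq0 hq, one_div,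
        ENNReal.rpow_inv_rpow (ne_of_gt hqrpos)]
      calc ∫⁻ g, (‖f g‖₊ : ℝ≥0∞) ^ qr ∂μ
          ≤ M ^ (qr - pr) * ∫⁻ g, (‖f g‖₊ : ℝ≥0∞) ^ pr ∂μ :=
            lintegralRpowLe μ f hMne hprpos.le hqrpr
        _ ≤ (N ^ (1 / pr) * Fp) ^ (qr - pr) * Fp ^ pr := by
            rw [hLp]
            exact mul_le_mul_left (ENNReal.rpow_le_rpow hsup (by linarith)) _
        _ = N ^ ((1 / pr) * (qr - pr)) * (Fp ^ (qr - pr) * Fp ^ pr) := by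
            rw [ENNReal.mul_rpow_of_nonneg _ _ (by linarith), ENNReal.rpow_mul]
            ring
        _ = N ^ ((1 / pr) * (qr - pr)) * Fp ^ qr := by
            rw [← ENNReal.rpow_add_of_nonneg _ _ (by linarith) hprpos.le, sub_add_cancel]
        _ = (N ^ ((1 / p - 1 / q).toReal)) ^ qr * Fp ^ qr := by
            rw [← ENNReal.rpow_mul, hexp]
            congr 2
            field_simp
    have h2 := ENNReal.rpow_le_rpow hkey
      (le_of_lt (by positivity : (0 : ℝ) < 1 / qr))
    rwa [← ENNReal.rpow_mul, mul_one_div, div_self (ne_of_gt hqrpos), ENNReal.rpow_one,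
      ENNReal.mul_rpow_of_nonneg _ _ (by positivity),
      ← ENNReal.rpow_mul, mul_one_div, div_self (ne_of_gt hqrpos), ENNReal.rpow_one,
      ← ENNReal.rpow_mul, mul_one_div, div_self (ne_of_gt hqrpos), ENNReal.rpow_one] at h2
end

section
/- Characterization of L(λ) as an exponential density: for any strictly increasing sequence λ = (λ_n) of nonnegative reals tending to infinity, limsup_{n→∞} (log n)/λ_n = limsup_{j→∞} (log #(λ ∩ [j, j+1)))/j, where both sides may be infinite. -/
open Filter

noncomputable def Af (lam : ℕ → ℝ) (x : ℝ) : ℕ := sInf {n | x ≤ lam n}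

theorem Af_ne (lam : ℕ → ℝ) (h3 : Tendsto lam atTop atTop) (x : ℝ) :
    {n | x ≤ lam n}.Nonempty := (h3.eventually_ge_atTop x).exists

theorem lam_lt_iff {lam : ℕ → ℝ} (h1 : StrictMono lam) (h3 : Tendsto lam atTop atTop)
    (x : ℝ) (n : ℕ) : lam n < x ↔ n < Af lam x := by
  constructor
  · intro h
    by_contra hn
    push_neg at hn
    have hspec : x ≤ lam (Af lam x) := Nat.sInf_mem (Af_ne lam h3 x)
    exact absurd (le_trans hspec (h1.monotone hn)) (not_le.2 h)
  · intro h
    exact lt_of_not_ge (Nat.notMem_of_lt_sInf h)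

theorem Af_mono {lam : ℕ → ℝ} (h3 : Tendsto lam atTop atTop) : Monotone (Af lam) :=
  fun x y hxy => by
    have hspec : y ≤ lam (Af lam y) := Nat.sInf_mem (Af_ne lam h3 y)
    exact Nat.sInf_le (le_trans hxy hspec)

theorem card_eq {lam : ℕ → ℝ} (h1 : StrictMono lam) (h3 : Tendsto lam atTop atTop) (j : ℕ) :
    Nat.card {n : ℕ | lam n ∈ Set.Ico (j : ℝ) (j + 1)}
      = Af lam ((j : ℝ) + 1) - Af lam (j : ℝ) := by
  have hset : {n : ℕ | lam n ∈ Set.Ico (j : ℝ) (j + 1)}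
      = Set.Ico (Af lam (j : ℝ)) (Af lam ((j : ℝ) + 1)) := by
    ext n
    simp only [Set.mem_setOf_eq, Set.mem_Ico]
    rw [← not_lt (a := lam n) (b := (j : ℝ)), lam_lt_iff h1 h3, lam_lt_iff h1 h3, not_lt]
  rw [hset, Nat.card_coe_set_eq, ← Finset.coe_Ico, Set.ncard_coe_finset, Nat.card_Ico]

theorem log_nat_nonneg (m : ℕ) : 0 ≤ Real.log m := by
  rcases Nat.eq_zero_or_pos m with h | h
  · simp [h]
  · exact Real.log_nonneg (by exact_mod_cast h)

set_option maxHeartbeats 1600000 in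
/-- Characterization of `L(λ)` as an exponential density:
`limsup (log n)/λ_n = limsup (log #(λ ∩ [j,j+1)))/j`, possibly infinite. -/
theorem L_eq_exponential_density (lam : ℕ → ℝ) (h1 : StrictMono lam)
    (h2 : ∀ n, 0 ≤ lam n) (h3 : Tendsto lam atTop atTop) :
    Filter.limsup (fun n : ℕ => ((Real.log n / lam n : ℝ) : EReal)) atTop =
      Filter.limsup (fun j : ℕ =>
        ((Real.log (Nat.card {n : ℕ | lam n ∈ Set.Ico (j : ℝ) (j + 1)}) / j : ℝ) : EReal))
        atTop := by
  set N : ℕ → ℕ := fun j => Nat.card {n : ℕ | lam n ∈ Set.Ico (j : ℝ) (j + 1)} with hNdef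
  set F : ℕ → EReal := fun n : ℕ => ((Real.log n / lam n : ℝ) : EReal) with hFdef
  set G : ℕ → EReal := fun j : ℕ => ((Real.log (N j) / j : ℝ) : EReal) with hGdef
  have hlt : ∀ (x : ℝ) (n : ℕ), lam n < x ↔ n < Af lam x := lam_lt_iff h1 h3
  have hNA : ∀ j : ℕ, N j = Af lam ((j : ℝ) + 1) - Af lam (j : ℝ) := card_eq h1 h3
  have hG0 : ∀ j : ℕ, (0 : EReal) ≤ G j := fun j =>
    EReal.coe_nonneg.mpr (div_nonneg (log_nat_nonneg _) (Nat.cast_nonneg j))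
  have hLHS0 : (0 : EReal) ≤ Filter.limsup F atTop := by
    refine le_limsup_of_frequently_le (Filter.Eventually.frequently ?_) isBounded_le_of_top
    filter_upwards [h3.eventually_gt_atTop 0] with n hn
    exact EReal.coe_nonneg.mpr (div_nonneg (log_nat_nonneg n) hn.le)
  have hRHS0 : (0 : EReal) ≤ Filter.limsup G atTop :=
    le_limsup_of_frequently_le (Filter.Eventually.frequently (Filter.Eventually.of_forall hG0))
      isBounded_le_of_top
  apply le_antisymm
  · -- limsup F ≤ limsup G
    by_contra hcon
    push_neg at hcon
    obtain ⟨c, hc1, hc2⟩ := EReal.lt_iff_exists_real_btwn.mp hcon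
    obtain ⟨c', hc'1, hc'2⟩ := EReal.lt_iff_exists_real_btwn.mp hc1
    have hcc' : c' < c := by exact_mod_cast hc'2
    have hc'pos : 0 < c' := by exact_mod_cast lt_of_le_of_lt hRHS0 hc'1
    obtain ⟨M₀, hM₀⟩ := eventually_atTop.mp (eventually_lt_of_limsup_lt hc'1)
    set M : ℕ := max M₀ 1 with hMdef
    have hNle : ∀ j, M ≤ j → (N j : ℝ) ≤ Real.exp (c' * j) := by
      intro j hj
      have hj1 : 1 ≤ j := le_trans (le_max_right _ _) hj
      have hjR : (0:ℝ) < j := by exact_mod_cast hj1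
      have hGj : Real.log (N j) / j < c' :=
        EReal.coe_lt_coe_iff.mp (hM₀ j (le_trans (le_max_left _ _) hj))
      have hlog : Real.log (N j) < c' * j := by
        rw [div_lt_iff₀ hjR] at hGj; linarith [hGj]
      rcases Nat.eq_zero_or_pos (N j) with h0 | h0
      · rw [h0]; simpa using (Real.exp_pos _).le
      · have : (N j : ℝ) = Real.exp (Real.log (N j)) :=
          (Real.exp_log (by exact_mod_cast h0)).symm
        rw [this]
        exact (Real.exp_le_exp.mpr hlog.le)
    set B : ℕ → ℕ := fun j => Af lam (j : ℝ) with hBdef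
    have hBsucc : ∀ j : ℕ, Af lam ((j : ℝ) + 1) = B (j + 1) := by
      intro j; simp only [hBdef]; congr 1; push_cast; ring
    have hBadd : ∀ j : ℕ, B (j + 1) = B j + N j := by
      intro j
      have h1' : N j = B (j + 1) - B j := by
        have h := hNA j; rw [hBsucc j] at h; exact h
      have h2' : B j ≤ B (j + 1) := by
        have : Af lam ((j:ℕ):ℝ) ≤ Af lam (((j+1:ℕ)):ℝ) :=
          Af_mono h3 (by push_cast; linarith)
        exact this
      omega
    set C : ℝ := (B M : ℝ) with hCdef
    have hCnn : 0 ≤ C := Nat.cast_nonneg _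
    have key : ∀ j, M ≤ j → (B (j + 1) : ℝ) ≤ C + (j + 1) * Real.exp (c' * j) := by
      intro j hj
      induction j, hj using Nat.le_induction with
      | base =>
        have h := hNle M le_rfl
        have hb := hBadd M
        have he := Real.exp_pos (c' * M)
        have hM1 : (1:ℝ) ≤ (M:ℝ) + 1 := by
          have : (0:ℝ) ≤ (M:ℝ) := Nat.cast_nonneg _
          linarith
        rw [hb]
        push_cast
        nlinarith
      | succ j hj ih =>
        have h := hNle (j+1) (by omega)
        have hb := hBadd (j+1)
        have he : Real.exp (c' * j) ≤ Real.exp (c' * (j+1)) := by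
          apply Real.exp_le_exp.mpr
          have : (0:ℝ) ≤ (j:ℝ) := Nat.cast_nonneg _
          nlinarith
        have hep := Real.exp_pos (c' * ((j:ℝ)+1))
        rw [hb]
        push_cast at h ih ⊢
        nlinarith
    -- sublinearity of log
    have hδ : (0:ℝ) < (c - c')/2 := by linarith
    obtain ⟨Y, hY⟩ := eventually_atTop.mp (Asymptotics.isLittleO_iff.mp
      Real.isLittleO_log_id_atTop hδ)
    have hTlog : ∀ x : ℝ, max Y (C + 1) ≤ x → Real.log (C + x + 1) ≤ (c - c') * x := by
      intro x hx
      have hxY : Y ≤ x := le_trans (le_max_left _ _) hx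
      have hxC : C + 1 ≤ x := le_trans (le_max_right _ _) hx
      have hxpos : (0:ℝ) < x := by linarith
      have hy := hY (C + x + 1) (by linarith)
      simp only [Real.norm_eq_abs, id_eq] at hy
      have h1' : Real.log (C + x + 1) ≤ |Real.log (C + x + 1)| := le_abs_self _
      have h2' : |C + x + 1| = C + x + 1 := abs_of_pos (by linarith)
      rw [h2'] at hy
      nlinarith
    have hFev : ∀ᶠ n in atTop, F n ≤ (c : EReal) := by
      filter_upwards [h3.eventually_ge_atTop (max (max Y (C+1)) ((M:ℝ)+1)),
        eventually_ge_atTop 1] with n hn hn1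
      have hnY : max Y (C + 1) ≤ lam n := le_trans (le_max_left _ _) hn
      have hnM : (M:ℝ) + 1 ≤ lam n := le_trans (le_max_right _ _) hn
      have hlampos : (0:ℝ) < lam n := by
        have : (0:ℝ) ≤ (M:ℝ) := Nat.cast_nonneg _
        linarith
      set j : ℕ := Nat.floor (lam n) with hjdef
      have hjle : (j : ℝ) ≤ lam n := Nat.floor_le (h2 n)
      have hjlt : lam n < (j:ℝ) + 1 := Nat.lt_floor_add_one _
      have hjM : M ≤ j := by
        have hr : (M:ℝ) < (j:ℝ) + 1 := by linarith
        have : M < j + 1 := by exact_mod_cast hr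
        omega
      have hnlt : n < B (j + 1) := by
        rw [← hBsucc j]
        exact (hlt ((j:ℝ)+1) n).mp hjlt
      have hnle : (n:ℝ) ≤ C + ((j:ℝ) + 1) * Real.exp (c' * j) := by
        have h := key j hjM
        have : (n:ℝ) < (B (j+1) : ℝ) := by exact_mod_cast hnlt
        linarith
      have hexp1 : (1:ℝ) ≤ Real.exp (c' * j) := Real.one_le_exp (by positivity)
      have hn1R : (1:ℝ) ≤ (n:ℝ) := by exact_mod_cast hn1
      have hl1 : Real.log n ≤ Real.log ((C + (j:ℝ) + 1) * Real.exp (c' * j)) := by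
        apply Real.log_le_log (by linarith)
        nlinarith
      have hl2 : Real.log ((C + (j:ℝ) + 1) * Real.exp (c' * j))
          = Real.log (C + (j:ℝ) + 1) + c' * j := by
        rw [Real.log_mul (by positivity) (by positivity), Real.log_exp]
      have hl3 : Real.log (C + (j:ℝ) + 1) ≤ Real.log (C + lam n + 1) := by
        apply Real.log_le_log (by positivity)
        linarith
      have hl4 : Real.log (C + lam n + 1) ≤ (c - c') * lam n := hTlog _ hnY
      have hfin : Real.log n ≤ c * lam n := by
        have : c' * (j:ℝ) ≤ c' * lam n := by nlinarith
        nlinarith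
      have hc'' : Real.log n / lam n ≤ c := by
        rw [div_le_iff₀ hlampos]; linarith
      exact EReal.coe_le_coe_iff.mpr hc''
    have hle : Filter.limsup F atTop ≤ (c : EReal) := limsup_le_of_le (h := hFev)
    exact absurd hle (not_le.mpr hc2)
  · -- limsup G ≤ limsup F
    by_contra hcon
    push_neg at hcon
    obtain ⟨c, hc1, hc2⟩ := EReal.lt_iff_exists_real_btwn.mp hcon
    obtain ⟨c', hc'1, hc'2⟩ := EReal.lt_iff_exists_real_btwn.mp hc1
    have hcc' : c' < c := by exact_mod_cast hc'2
    have hc'pos : 0 < c' := by exact_mod_cast lt_of_le_of_lt hLHS0 hc'1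
    obtain ⟨M, hM⟩ := eventually_atTop.mp (eventually_lt_of_limsup_lt hc'1)
    set j₁ : ℕ := Nat.ceil (lam M) + 1 with hj₁def
    set j₂ : ℕ := Nat.ceil ((Real.log 2 + c') / (c - c')) with hj₂def
    have hGev : ∀ᶠ j in atTop, G j ≤ (c : EReal) := by
      filter_upwards [eventually_ge_atTop (max (max j₁ j₂) 1)] with j hj
      have hjj₁ : j₁ ≤ j := le_trans (le_trans (le_max_left _ _) (le_max_left _ _)) hj
      have hjj₂ : j₂ ≤ j := le_trans (le_trans (le_max_right _ _) (le_max_left _ _)) hj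
      have hj1 : 1 ≤ j := le_trans (le_max_right _ _) hj
      have hjR : (0:ℝ) < (j:ℝ) := by exact_mod_cast hj1
      have hcj : Real.log 2 + c' ≤ (c - c') * j := by
        have h1' : (Real.log 2 + c') / (c - c') ≤ (j₂:ℝ) := Nat.le_ceil _
        have h2' : (j₂ : ℝ) ≤ (j:ℝ) := by exact_mod_cast hjj₂
        rw [div_le_iff₀ (by linarith)] at h1'
        nlinarith
      rcases le_or_gt (N j) 1 with hN1 | hN2
      · have hlog0 : Real.log (N j) = 0 := by
          rcases Nat.le_one_iff_eq_zero_or_eq_one.mp hN1 with h | h <;> rw [h] <;> norm_num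
        have hc'' : Real.log (N j) / j ≤ c := by
          rw [hlog0, zero_div]; linarith
        exact EReal.coe_le_coe_iff.mpr hc''
      · -- N j ≥ 2
        have hlamMj : lam M < (j:ℝ) := by
          have h1' : lam M ≤ (Nat.ceil (lam M) : ℝ) := Nat.le_ceil _
          have h2' : (Nat.ceil (lam M) : ℝ) < (j:ℝ) := by exact_mod_cast hjj₁
          linarith
        have hAjM : M < Af lam (j:ℝ) := (hlt (j:ℝ) M).mp hlamMj
        have hNAj := hNA j
        have hdiff : Af lam (j:ℝ) + 2 ≤ Af lam ((j:ℝ)+1) := by omega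
        set m : ℕ := Af lam ((j:ℝ)+1) - 1 with hmdef
        have hmM : M ≤ m := by omega
        have hm1 : 1 ≤ m := by omega
        have hmlt : m < Af lam ((j:ℝ)+1) := by omega
        have hlammlt : lam m < (j:ℝ) + 1 := (hlt _ m).mpr hmlt
        have hjlam : (j:ℝ) ≤ lam m := by
          by_contra hcm
          push_neg at hcm
          have := (hlt (j:ℝ) m).mp hcm
          omega
        have hlampos : (0:ℝ) < lam m := by linarith
        have hFm : Real.log m / lam m < c' := EReal.coe_lt_coe_iff.mp (hM m hmM)
        have hlogm : Real.log m < c' * ((j:ℝ) + 1) := by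
          rw [div_lt_iff₀ hlampos] at hFm
          nlinarith
        have hNm : (N j : ℝ) ≤ 2 * (m:ℝ) := by
          have : N j ≤ 2 * m := by omega
          exact_mod_cast this
        have hNpos : (0:ℝ) < (N j : ℝ) := by exact_mod_cast (by omega : 0 < N j)
        have hlogN : Real.log (N j) ≤ Real.log 2 + Real.log m := by
          have h1' : Real.log (N j) ≤ Real.log (2 * m) := Real.log_le_log hNpos hNm
          rwa [Real.log_mul (by norm_num) (by positivity)] at h1'
        have hfin : Real.log (N j) ≤ c * j := by nlinarith
        have hc'' : Real.log (N j) / j ≤ c := by rw [div_le_iff₀ hjR]; linarith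
        exact EReal.coe_le_coe_iff.mpr hc''
    have hle : Filter.limsup G atTop ≤ (c : EReal) := limsup_le_of_le (h := hGev)
    exact absurd hle (not_le.mpr hc2)
end

section
/- Interpolation of Λ-constants (Rudin-type): let A ⊆ ℝ be finite, 0 < p₁ ≤ p₂ < q₂ ≤ ∞ and p₁ ≤ q₁ ≤ q₂. Then Λ_{q₁,p₁}(A) ≤ Λ_{q₂,p₂}(A)^α where α = (1/p₁ − 1/q₁)/(1/p₂ − 1/q₂). -/
open scoped ENNReal
open MeasureTheory Finset

/-- The `Λ_{q,p}` constant of a finite set `A` of characters of a compact abelian group: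
the least `C ≥ 1` comparing the `L^q` and `L^p` norms of trigonometric polynomials with
frequencies in `A`. -/
noncomputable def LambdaConst {G : Type*} [CommGroup G] [TopologicalSpace G]
    [IsTopologicalGroup G] [CompactSpace G] [MeasurableSpace G] [BorelSpace G] (μ : Measure G)
    (A : Finset (ContinuousMonoidHom G Circle)) (q p : ℝ≥0∞) : ℝ≥0∞ :=
  sInf {C : ℝ≥0∞ | 1 ≤ C ∧ ∀ a : ContinuousMonoidHom G Circle → ℂ,
    eLpNorm (fun g => ∑ γ ∈ A, a γ * (γ g : ℂ)) q μ ≤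
      C * eLpNorm (fun g => ∑ γ ∈ A, a γ * (γ g : ℂ)) p μ}

section Aux
variable {X : Type*} [MeasurableSpace X] {μ : Measure X}

/-- Hölder-based log-convexity for lintegrals of powers. -/
lemma lyapA {F : X → ℝ≥0∞} (hF : AEMeasurable F μ) {p r q θ : ℝ}
    (hp : 0 < p) (hq : 0 < q) (hθ : 0 < θ) (hθ1 : θ < 1)
    (hrel : 1 / r = θ / p + (1 - θ) / q) :
    (∫⁻ a, F a ^ r ∂μ) ^ (1 / r) ≤
      ((∫⁻ a, F a ^ p ∂μ) ^ (1 / p)) ^ θ * ((∫⁻ a, F a ^ q ∂μ) ^ (1 / q)) ^ (1 - θ) := by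
  have h1θ : 0 < 1 - θ := by linarith
  have hr : 0 < r := by
    have h : 0 < 1 / r := by rw [hrel]; positivity
    exact one_div_pos.mp h
  set u : ℝ := p / (θ * r) with hu
  set v : ℝ := q / ((1 - θ) * r) with hv
  have hθr : 0 < θ * r := by positivity
  have h1θr : 0 < (1 - θ) * r := by positivity
  have hu0 : 0 < u := by positivity
  have hv0 : 0 < v := by positivity
  have h1u : 1 / u = θ * r / p := one_div_div _ _
  have h1v : 1 / v = (1 - θ) * r / q := one_div_div _ _
  have huv : 1 / u + 1 / v = 1 := by
    rw [h1u, h1v]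
    have : θ * r / p + (1 - θ) * r / q = r * (θ / p + (1 - θ) / q) := by ring
    rw [this, ← hrel]
    field_simp
  have hu1 : 1 < u := by
    have h1v' : 0 < 1 / v := by positivity
    have : 1 / u < 1 := by linarith
    have := (div_lt_one hu0).mp this
    linarith
  have hconj : u.HolderConjugate v := ⟨by rw [inv_one, ← one_div, ← one_div]; exact huv, hu0, hv0⟩
  have key := ENNReal.lintegral_mul_le_Lp_mul_Lq μ hconj
    (hF.pow_const (θ * r)) (hF.pow_const ((1 - θ) * r))
  have hlhs : ∀ a, ((fun a => F a ^ (θ * r)) * fun a => F a ^ ((1 - θ) * r)) a = F a ^ r := by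
    intro a
    rw [Pi.mul_apply, ← ENNReal.rpow_add_of_nonneg _ _ hθr.le h1θr.le]
    congr 1; ring
  have hup : θ * r * u = p := by rw [hu]; field_simp
  have hvq : (1 - θ) * r * v = q := by rw [hv]; field_simp
  rw [lintegral_congr hlhs] at key
  simp only [← ENNReal.rpow_mul, hup, hvq] at key
  calc (∫⁻ a, F a ^ r ∂μ) ^ (1 / r)
      ≤ ((∫⁻ a, F a ^ p ∂μ) ^ (1 / u) * (∫⁻ a, F a ^ q ∂μ) ^ (1 / v)) ^ (1 / r) :=
        ENNReal.rpow_le_rpow key (by positivity)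
    _ = ((∫⁻ a, F a ^ p ∂μ) ^ (1 / p)) ^ θ * ((∫⁻ a, F a ^ q ∂μ) ^ (1 / q)) ^ (1 - θ) := by
        rw [ENNReal.mul_rpow_of_nonneg _ _ (by positivity), ← ENNReal.rpow_mul,
          ← ENNReal.rpow_mul, ← ENNReal.rpow_mul, ← ENNReal.rpow_mul]
        congr 2
        · rw [h1u]; field_simp
        · rw [h1v]; field_simp

/-- `L^∞` endpoint log-convexity. -/
lemma lyapB {E : Type*} [NormedAddCommGroup E] {f : X → E} (hf : AEStronglyMeasurable f μ)
    {p r : ℝ} (hp : 0 < p) (hpr : p < r) :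
    eLpNorm' f r μ ≤ (eLpNorm' f p μ) ^ (p / r) * (eLpNormEssSup f μ) ^ (1 - p / r) := by
  have hr : 0 < r := hp.trans hpr
  have hθ : 0 < 1 - p / r := by
    have : p / r < 1 := (div_lt_one hr).mpr hpr
    linarith
  set F : X → ℝ≥0∞ := fun a => (‖f a‖₊ : ℝ≥0∞) with hFdef
  have hF : AEMeasurable F μ := hf.enorm
  set M := eLpNormEssSup f μ with hMdef
  by_cases hM : M = ⊤
  · by_cases hX : ∫⁻ a, F a ^ p ∂μ = 0
    · have hF0 : F =ᵐ[μ] 0 := by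
        have h := (lintegral_eq_zero_iff' (hF.pow_const p)).mp hX
        filter_upwards [h] with a ha
        simp only [Pi.zero_apply] at ha ⊢
        rcases ENNReal.rpow_eq_zero_iff.mp ha with ⟨h0, _⟩ | ⟨_, hneg⟩
        · exact h0
        · linarith
      exfalso
      have hM0 : M = 0 := by
        rw [hMdef, eLpNormEssSup_eq_zero_iff]
        filter_upwards [hF0] with a ha
        simpa [hFdef] using ha
      simp [hM0] at hM
    · refine le_top.trans (le_of_eq ?_)
      have h1 : (eLpNorm' f p μ) ^ (p / r) ≠ 0 := by
        simp only [eLpNorm']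
        intro h
        rcases ENNReal.rpow_eq_zero_iff.mp h with ⟨h0, _⟩ | ⟨_, hneg⟩
        · rcases ENNReal.rpow_eq_zero_iff.mp h0 with ⟨h00, _⟩ | ⟨_, hneg'⟩
          · exact hX h00
          · have : (0:ℝ) < 1 / p := by positivity
            linarith
        · have : (0:ℝ) < p / r := by positivity
          linarith
      rw [hM, ENNReal.top_rpow_of_pos hθ, ENNReal.mul_top h1]
  · have hFM : ∀ᵐ a ∂μ, F a ≤ M := ae_le_eLpNormEssSup
    have key : ∫⁻ a, F a ^ r ∂μ ≤ (∫⁻ a, F a ^ p ∂μ) * M ^ (r - p) := by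
      have h1 : ∫⁻ a, F a ^ r ∂μ = ∫⁻ a, F a ^ p * F a ^ (r - p) ∂μ := by
        refine lintegral_congr fun a => ?_
        rw [← ENNReal.rpow_add_of_nonneg _ _ hp.le (by linarith)]
        congr 1; ring
      rw [h1, ← lintegral_mul_const'' _ (hF.pow_const p)]
      refine lintegral_mono_ae ?_
      filter_upwards [hFM] with a ha
      exact mul_le_mul_right (ENNReal.rpow_le_rpow ha (by linarith)) _
    calc eLpNorm' f r μ = (∫⁻ a, F a ^ r ∂μ) ^ (1 / r) := by simp [eLpNorm', hFdef, enorm_eq_nnnorm]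
      _ ≤ ((∫⁻ a, F a ^ p ∂μ) * M ^ (r - p)) ^ (1 / r) :=
          ENNReal.rpow_le_rpow key (by positivity)
      _ = (eLpNorm' f p μ) ^ (p / r) * M ^ (1 - p / r) := by
          rw [ENNReal.mul_rpow_of_nonneg _ _ (by positivity)]
          simp only [eLpNorm', hFdef]
          rw [← ENNReal.rpow_mul, ← ENNReal.rpow_mul]
          congr 2 <;> field_simp

/-- Lyapunov interpolation inequality for `eLpNorm` with `ℝ≥0∞` exponents. -/
lemma lyap {E : Type*} [NormedAddCommGroup E] {f : X → E} (hf : AEStronglyMeasurable f μ)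
    {p r q : ℝ≥0∞} (hp : 0 < p) (hpt : p ≠ ⊤) (hpr : p ≤ r) (hrq : r ≤ q)
    {θ : ℝ} (hθ0 : 0 ≤ θ) (hθ1 : θ ≤ 1)
    (hrel : (1 / r).toReal = θ * (1 / p).toReal + (1 - θ) * (1 / q).toReal) :
    eLpNorm f r μ ≤ eLpNorm f p μ ^ θ * eLpNorm f q μ ^ (1 - θ) := by
  have hr0 : r ≠ 0 := (hp.trans_le hpr).ne'
  have hq0 : q ≠ 0 := (hp.trans_le (hpr.trans hrq)).ne'
  have hpinv : 0 < (1 / p).toReal := by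
    rw [one_div, ENNReal.toReal_inv]
    have := ENNReal.toReal_pos hp.ne' hpt
    positivity
  by_cases hθz : θ = 0
  · subst hθz
    simp only [zero_mul, zero_add, sub_zero, one_mul] at hrel
    have hrq' : r = q := by
      have h1 : 1 / r ≠ ⊤ := by simpa [one_div] using hr0
      have h2 : 1 / q ≠ ⊤ := by simpa [one_div] using hq0
      have := (ENNReal.toReal_eq_toReal_iff' h1 h2).mp hrel
      rw [one_div, one_div] at this
      exact inv_injective this
    subst hrq'
    simp
  by_cases hθo : θ = 1
  · subst hθo
    simp only [sub_self, zero_mul, add_zero, one_mul] at hrel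
    have hrp : r = p := by
      have h1 : 1 / r ≠ ⊤ := by simpa [one_div] using hr0
      have h2 : 1 / p ≠ ⊤ := by simpa [one_div] using hp.ne'
      have := (ENNReal.toReal_eq_toReal_iff' h1 h2).mp hrel
      rw [one_div, one_div] at this
      exact inv_injective this
    subst hrp
    simp
  have hθpos : 0 < θ := lt_of_le_of_ne hθ0 (Ne.symm hθz)
  have hθlt : θ < 1 := lt_of_le_of_ne hθ1 hθo
  by_cases hrt : r = ⊤
  · exfalso
    have hqt : q = ⊤ := top_le_iff.mp (hrt ▸ hrq)
    rw [hrt, hqt] at hrel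
    simp only [ENNReal.toReal_top, one_div, ENNReal.inv_top, ENNReal.toReal_zero,
      mul_zero, add_zero, ENNReal.toReal_inv] at hrel
    have hppos : 0 < p.toReal := ENNReal.toReal_pos hp.ne' hpt
    have h2 : 0 < θ * p.toReal⁻¹ := by positivity
    rw [← hrel] at h2
    exact lt_irrefl _ h2
  -- now r finite
  have hpr' : p.toReal ≤ r.toReal := (ENNReal.toReal_le_toReal hpt hrt).mpr hpr
  have hppos : 0 < p.toReal := ENNReal.toReal_pos hp.ne' hpt
  have hrpos : 0 < r.toReal := ENNReal.toReal_pos hr0 hrt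
  by_cases hqt : q = ⊤
  · rw [hqt] at hrel
    simp only [one_div, ENNReal.inv_top, ENNReal.toReal_zero, mul_zero, add_zero,
      ENNReal.toReal_inv] at hrel
    have hθeq : θ = p.toReal / r.toReal := by
      field_simp at hrel ⊢
      linarith
    have hplt : p.toReal < r.toReal := by
      rcases lt_or_eq_of_le hpr' with h | h
      · exact h
      · exfalso; apply hθo; rw [hθeq, ← h]; field_simp
    rw [eLpNorm_eq_eLpNorm' hr0 hrt, eLpNorm_eq_eLpNorm' hp.ne' hpt, hqt,
      eLpNorm_exponent_top, hθeq]
    exact lyapB hf hppos hplt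
  · have hqpos : 0 < q.toReal := ENNReal.toReal_pos hq0 hqt
    have hrel' : 1 / r.toReal = θ / p.toReal + (1 - θ) / q.toReal := by
      rw [one_div, ← ENNReal.toReal_inv, ← one_div]
      rw [hrel, one_div, one_div, ENNReal.toReal_inv, ENNReal.toReal_inv]
      ring
    have := lyapA (μ := μ) hf.enorm hppos hqpos hθpos hθlt hrel'
    rw [eLpNorm_eq_eLpNorm' hr0 hrt, eLpNorm_eq_eLpNorm' hp.ne' hpt,
      eLpNorm_eq_eLpNorm' hq0 hqt]
    simpa [eLpNorm'] using this

end Aux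

/-- Interpolation of `Λ`-constants (Rudin-type):
`Λ_{q₁,p₁}(A) ≤ Λ_{q₂,p₂}(A)^α` with `α = (1/p₁ − 1/q₁)/(1/p₂ − 1/q₂)`. -/
theorem lambdaConst_interpolation {G : Type*} [CommGroup G] [TopologicalSpace G]
    [IsTopologicalGroup G] [CompactSpace G] [MeasurableSpace G] [BorelSpace G]
    (μ : Measure G) [μ.IsHaarMeasure] [IsProbabilityMeasure μ]
    (A : Finset (ContinuousMonoidHom G Circle))
    (p₁ p₂ q₁ q₂ : ℝ≥0∞) (h1 : 0 < p₁) (h2 : p₁ ≤ p₂) (h3 : p₂ < q₂)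
    (h4 : p₁ ≤ q₁) (h5 : q₁ ≤ q₂) :
    LambdaConst μ A q₁ p₁ ≤
      LambdaConst μ A q₂ p₂ ^ ((1 / p₁ - 1 / q₁) / (1 / p₂ - 1 / q₂)).toReal := by
  classical
  have hp₂t : p₂ ≠ ⊤ := h3.ne_top
  have hp₁t : p₁ ≠ ⊤ := (h2.trans_lt h3).ne_top
  have hp₂0 : 0 < p₂ := h1.trans_le h2
  have hq₁0 : 0 < q₁ := h1.trans_le h4
  have hq₂0 : 0 < q₂ := hp₂0.trans h3
  set aR := (1 / p₁).toReal with haR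
  set bR := (1 / p₂).toReal with hbR
  set cR := (1 / q₁).toReal with hcR
  set dR := (1 / q₂).toReal with hdR
  have hinvp₁t : 1 / p₁ ≠ ⊤ := by simpa [one_div] using h1.ne'
  have hinvp₂t : 1 / p₂ ≠ ⊤ := by simpa [one_div] using hp₂0.ne'
  have hinvq₁t : 1 / q₁ ≠ ⊤ := by simpa [one_div] using hq₁0.ne'
  have hinvq₂t : 1 / q₂ ≠ ⊤ := by simpa [one_div] using hq₂0.ne'
  have ha : 0 < aR := by
    rw [haR, one_div, ENNReal.toReal_inv]
    have := ENNReal.toReal_pos h1.ne' hp₁t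
    positivity
  have hddb : dR < bR := by
    rw [hdR, hbR]
    exact (ENNReal.toReal_lt_toReal hinvq₂t hinvp₂t).mpr
      (by simpa [one_div] using ENNReal.inv_lt_inv' h3)
  have hba : bR ≤ aR := by
    rw [haR, hbR]
    exact (ENNReal.toReal_le_toReal hinvp₂t hinvp₁t).mpr
      (by simpa [one_div] using ENNReal.inv_le_inv' h2)
  have hdc : dR ≤ cR := by
    rw [hdR, hcR]
    exact (ENNReal.toReal_le_toReal hinvq₂t hinvq₁t).mpr
      (by simpa [one_div] using ENNReal.inv_le_inv' h5)
  have hca : cR ≤ aR := by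
    rw [haR, hcR]
    exact (ENNReal.toReal_le_toReal hinvq₁t hinvp₁t).mpr
      (by simpa [one_div] using ENNReal.inv_le_inv' h4)
  have hα : ((1 / p₁ - 1 / q₁) / (1 / p₂ - 1 / q₂)).toReal = (aR - cR) / (bR - dR) := by
    rw [ENNReal.toReal_div,
      ENNReal.toReal_sub_of_le (by simpa [one_div] using ENNReal.inv_le_inv' h4) hinvp₁t,
      ENNReal.toReal_sub_of_le (by simpa [one_div] using ENNReal.inv_le_inv' h3.le) hinvp₂t]
  rw [hα]
  set α := (aR - cR) / (bR - dR) with hαdef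
  have hαnn : 0 ≤ α := div_nonneg (by linarith) (by linarith)
  by_cases hq₁p₁ : q₁ = p₁
  · -- trivial case: α = 0
    have hceqa : cR = aR := by rw [hcR, haR, hq₁p₁]
    have hα0 : α = 0 := by rw [hαdef, hceqa]; simp
    rw [hα0, ENNReal.rpow_zero]
    apply sInf_le
    refine ⟨le_refl 1, fun a' => ?_⟩
    rw [hq₁p₁, one_mul]
  -- main case
  have hclta : cR < aR := by
    rcases lt_or_eq_of_le hca with h | h
    · exact h
    · exfalso
      apply hq₁p₁
      have := (ENNReal.toReal_eq_toReal_iff' hinvq₁t hinvp₁t).mp (by rw [← hcR, ← haR, h])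
      rw [one_div, one_div] at this
      exact inv_injective this
  have hαpos : 0 < α := div_pos (by linarith) (by linarith)
  set S₂ := {C : ℝ≥0∞ | 1 ≤ C ∧ ∀ a : ContinuousMonoidHom G Circle → ℂ,
    eLpNorm (fun g => ∑ γ ∈ A, a γ * (γ g : ℂ)) q₂ μ ≤
      C * eLpNorm (fun g => ∑ γ ∈ A, a γ * (γ g : ℂ)) p₂ μ} with hS₂
  suffices h : ∀ C ∈ S₂, LambdaConst μ A q₁ p₁ ≤ C ^ α by
    have hle : LambdaConst μ A q₁ p₁ ^ (1 / α) ≤ sInf S₂ := by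
      apply le_sInf
      intro C hC
      calc LambdaConst μ A q₁ p₁ ^ (1 / α) ≤ (C ^ α) ^ (1 / α) :=
            ENNReal.rpow_le_rpow (h C hC) (by positivity)
        _ = C := by
            rw [← ENNReal.rpow_mul, mul_one_div_cancel hαpos.ne', ENNReal.rpow_one]
    calc LambdaConst μ A q₁ p₁ = (LambdaConst μ A q₁ p₁ ^ (1 / α)) ^ α := by
          rw [← ENNReal.rpow_mul, one_div, inv_mul_cancel₀ hαpos.ne', ENNReal.rpow_one]
      _ ≤ (sInf S₂) ^ α := ENNReal.rpow_le_rpow hle hαnn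
      _ = LambdaConst μ A q₂ p₂ ^ α := rfl
  intro C hC
  obtain ⟨hC1, hC2⟩ := hC
  apply sInf_le
  refine ⟨ENNReal.one_le_rpow hC1 hαpos, fun a' => ?_⟩
  set f : G → ℂ := fun g => ∑ γ ∈ A, a' γ * (γ g : ℂ) with hfdef
  have hfc : Continuous f := by
    apply continuous_finset_sum
    intro γ _
    exact continuous_const.mul (continuous_subtype_val.comp (map_continuous γ))
  have hfm : AEStronglyMeasurable f μ := hfc.aestronglyMeasurable
  obtain ⟨M, hM⟩ : ∃ M : ℝ, ∀ x, ‖f x‖ ≤ M := by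
    obtain ⟨M, hM⟩ := isCompact_univ.exists_bound_of_continuousOn hfc.continuousOn
    exact ⟨M, fun x => hM x (Set.mem_univ x)⟩
  have hfin : ∀ t : ℝ≥0∞, eLpNorm f t μ ≠ ⊤ := by
    intro t
    have hb := eLpNorm_le_of_ae_bound (μ := μ) (p := t) (Filter.Eventually.of_forall hM)
    have h1' : μ Set.univ ^ t.toReal⁻¹ * ENNReal.ofReal M = ENNReal.ofReal M := by
      simp [measure_univ]
    exact ne_top_of_le_ne_top ENNReal.ofReal_ne_top (hb.trans h1'.le)
  set x := eLpNorm f p₁ μ with hxdef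
  set w := eLpNorm f q₂ μ with hwdef
  set z := eLpNorm f q₁ μ with hzdef
  have hzw : z ≤ w := eLpNorm_le_eLpNorm_of_exponent_le h5 hfm
  by_cases hw0 : w = 0
  · calc z ≤ w := hzw
      _ = 0 := hw0
      _ ≤ C ^ α * x := zero_le'
  by_cases hx0 : x = 0
  · exfalso
    apply hw0
    have hf0 : f =ᵐ[μ] 0 := (eLpNorm_eq_zero_iff hfm h1.ne').mp hx0
    rw [hwdef, eLpNorm_congr_ae hf0, eLpNorm_zero]
  have hxt : x ≠ ⊤ := hfin _
  have hwt : w ≠ ⊤ := hfin _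
  have hda : dR < aR := lt_of_lt_of_le hddb hba
  set θ₁ := (bR - dR) / (aR - dR) with hθ₁def
  set θ' := (cR - dR) / (aR - dR) with hθ'def
  have hθ₁pos : 0 < θ₁ := div_pos (by linarith) (by linarith)
  have hθ₁le : θ₁ ≤ 1 := (div_le_one (by linarith)).mpr (by linarith)
  have hθ'nn : 0 ≤ θ' := div_nonneg (by linarith) (by linarith)
  have hθ'le : θ' ≤ 1 := (div_le_one (by linarith)).mpr (by linarith)
  have hrel1 : (1 / p₂).toReal = θ₁ * (1 / p₁).toReal + (1 - θ₁) * (1 / q₂).toReal := by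
    rw [← hbR, ← haR, ← hdR]
    have hmul : θ₁ * (aR - dR) = bR - dR := by
      rw [hθ₁def]; exact div_mul_cancel₀ _ (by linarith)
    have hre : θ₁ * aR + (1 - θ₁) * dR = θ₁ * (aR - dR) + dR := by ring
    rw [hre, hmul]; ring
  have hrel2 : (1 / q₁).toReal = θ' * (1 / p₁).toReal + (1 - θ') * (1 / q₂).toReal := by
    rw [← hcR, ← haR, ← hdR]
    have hmul : θ' * (aR - dR) = cR - dR := by
      rw [hθ'def]; exact div_mul_cancel₀ _ (by linarith)
    have hre : θ' * aR + (1 - θ') * dR = θ' * (aR - dR) + dR := by ring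
    rw [hre, hmul]; ring
  have step0 : eLpNorm f p₂ μ ≤ x ^ θ₁ * w ^ (1 - θ₁) :=
    lyap hfm h1 hp₁t h2 h3.le hθ₁pos.le hθ₁le hrel1
  have hw1 : w ≤ C * (x ^ θ₁ * w ^ (1 - θ₁)) :=
    (hC2 a').trans (mul_le_mul_right step0 C)
  have hcancel : w ^ θ₁ ≤ C * x ^ θ₁ := by
    have hrw : w = w ^ θ₁ * w ^ (1 - θ₁) := by
      rw [← ENNReal.rpow_add _ _ hw0 hwt, show θ₁ + (1 - θ₁) = 1 by ring, ENNReal.rpow_one]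
    have h2' : w ^ θ₁ * w ^ (1 - θ₁) ≤ (C * x ^ θ₁) * w ^ (1 - θ₁) := by
      rw [← hrw]
      calc w ≤ C * (x ^ θ₁ * w ^ (1 - θ₁)) := hw1
        _ = (C * x ^ θ₁) * w ^ (1 - θ₁) := by ring
    exact (ENNReal.mul_le_mul_iff_left
      (by
        intro h
        rcases ENNReal.rpow_eq_zero_iff.mp h with ⟨h0, _⟩ | ⟨ht, _⟩
        · exact hw0 h0
        · exact hwt ht)
      (ENNReal.rpow_ne_top_of_nonneg (by linarith) hwt)).mp h2'
  have hwx : w ≤ C ^ (1 / θ₁) * x := by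
    calc w = (w ^ θ₁) ^ (1 / θ₁) := by
          rw [← ENNReal.rpow_mul, mul_one_div_cancel hθ₁pos.ne', ENNReal.rpow_one]
      _ ≤ (C * x ^ θ₁) ^ (1 / θ₁) := ENNReal.rpow_le_rpow hcancel (by positivity)
      _ = C ^ (1 / θ₁) * x := by
          rw [ENNReal.mul_rpow_of_nonneg _ _ (by positivity), ← ENNReal.rpow_mul,
            mul_one_div_cancel hθ₁pos.ne', ENNReal.rpow_one]
  have step2 : z ≤ x ^ θ' * w ^ (1 - θ') :=
    lyap hfm h1 hp₁t h4 h5 hθ'nn hθ'le hrel2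
  have hexp : (1 / θ₁) * (1 - θ') = α := by
    rw [hθ₁def, hθ'def, hαdef]
    have h1' : aR - dR ≠ 0 := by linarith
    have h2' : bR - dR ≠ 0 := by linarith
    field_simp
    ring
  have hxx : x ^ θ' * x ^ (1 - θ') = x := by
    rw [← ENNReal.rpow_add _ _ hx0 hxt, show θ' + (1 - θ') = 1 by ring, ENNReal.rpow_one]
  calc z ≤ x ^ θ' * w ^ (1 - θ') := step2
    _ ≤ x ^ θ' * (C ^ (1 / θ₁) * x) ^ (1 - θ') :=
        mul_le_mul_right (ENNReal.rpow_le_rpow hwx (by linarith)) _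
    _ = x ^ θ' * ((C ^ (1 / θ₁)) ^ (1 - θ') * x ^ (1 - θ')) := by
        rw [ENNReal.mul_rpow_of_nonneg _ _ (by linarith)]
    _ = (C ^ (1 / θ₁)) ^ (1 - θ') * (x ^ θ' * x ^ (1 - θ')) := by ring
    _ = C ^ α * x := by rw [hxx, ← ENNReal.rpow_mul, hexp]
end

section
/- If some abscissa S_p is finite then L(λ) is finite: let λ be a frequency, 2 ≤ p < ∞, and suppose there exist σ > 0 and C > 0 such that Σ_n |a_n| e^{-λ_n σ} ≤ C ‖D‖_p for every Dirichlet polynomial D = Σ a_n e^{-λ_n s}. Then L(λ) ≤ pσ. In particular L(λ) < ∞. -/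
/-!
Test the hypothesis on `D_N = ∑_{n<N} e^{-λ_n s}`. Since `λ` is increasing, the left side is at
least `N e^{-λ_{N-1} σ}`. On the other side, `|D_N| ≤ N` pointwise, and the mean square of `D_N`
is `N`, because for distinct frequencies `∫_{-T}^{T} e^{i(λ_m - λ_n)t} dt` stays bounded
as `T → ∞`; interpolating, `‖D_N‖_p ≤ (N^{p-2} · N)^{1/p} = N^{1-1/p}`. Taking logarithms gives
`log N ≤ p log C + p σ λ_{N-1}`, and dividing by `λ_{N-1} → ∞` yields `L(λ) ≤ p σ`.
-/
open Finset Filter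

/-- The Besicovitch `r`-norm of a function on the real line. -/
noncomputable def bNorm (r : ℝ) (f : ℝ → ℂ) : ℝ :=
  (Filter.limsup (fun T : ℝ => (1 / (2 * T)) * ∫ t in (-T)..T, ‖f t‖ ^ r)
    Filter.atTop) ^ (1 / r)

open Topology

section BesicovitchNorm

open Complex MeasureTheory

lemma norm_integral_exp_mul_I_le {r : ℝ} (hr : r ≠ 0) (T : ℝ) :
    ‖∫ t in (-T)..T, exp (r * I * t)‖ ≤ 2 / |r| := by
  have hrI : (r : ℂ) * I ≠ 0 := mul_ne_zero (ofReal_ne_zero.mpr hr) I_ne_zero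
  have hunit : ∀ s : ℝ, ‖exp (r * I * s)‖ = 1 := fun s => by simp [norm_exp]
  rw [integral_exp_mul_complex hrI, norm_div, norm_mul, norm_I, mul_one, norm_real,
    Real.norm_eq_abs]
  gcongr
  calc _ ≤ ‖exp (r * I * T)‖ + ‖exp (r * I * ((-T : ℝ) : ℂ))‖ := norm_sub_le _ _
    _ = 2 := by rw [hunit, hunit]; norm_num

lemma re_integral_exp_mul_I_le (r T : ℝ) :
    (∫ t in (-T)..T, exp (r * I * t)).re ≤ (if r = 0 then 2 * T else 0) + 2 / |r| := by
  split_ifs with hr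
  · subst hr
    simp [two_mul]
  · simpa using (re_le_norm _).trans (norm_integral_exp_mul_I_le hr T)

/-- The diagonal terms `m = n` of the double sum vanish, since `2 / |0| = 0`. -/
lemma integral_norm_sum_exp_sq_le {ι : Type*} (s : Finset ι) {lam : ι → ℝ}
    (hlam : Set.InjOn lam s) (T : ℝ) :
    ∫ t in (-T)..T, ‖∑ n ∈ s, exp (-(lam n * t) * I)‖ ^ 2 ≤
      2 * T * #s + ∑ m ∈ s, ∑ n ∈ s, 2 / |lam m - lam n| := by
  classical
  have hsq : ∀ t : ℝ, ((‖∑ n ∈ s, exp (-(lam n * t) * I)‖ ^ 2 : ℝ) : ℂ) =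
      ∑ m ∈ s, ∑ n ∈ s, exp ((lam m - lam n : ℝ) * I * t) := fun t => by
    rw [ofReal_pow, ← mul_conj', map_sum, mul_comm, sum_mul_sum]
    refine sum_congr rfl fun m _ => sum_congr rfl fun n _ => ?_
    rw [← exp_conj, ← exp_add]
    congr 1
    simp only [map_mul, map_neg, conj_ofReal, conj_I]
    push_cast
    ring
  have hint : ∀ c : ℂ, IntervalIntegrable (fun t : ℝ => exp (c * t)) volume (-T) T :=
    fun c => (by fun_prop : Continuous fun t : ℝ => exp (c * t)).intervalIntegrable _ _
  calc ∫ t in (-T)..T, ‖∑ n ∈ s, exp (-(lam n * t) * I)‖ ^ 2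
      = (∑ m ∈ s, ∑ n ∈ s, ∫ t in (-T)..T, exp ((lam m - lam n : ℝ) * I * t)).re := by
        rw [← ofReal_re (∫ _ in _.._, _), ← intervalIntegral.integral_ofReal]
        simp_rw [hsq]
        rw [intervalIntegral.integral_finsetSum
          (f := fun m t => ∑ n ∈ s, exp ((lam m - lam n : ℝ) * I * t))
          fun m _ => Continuous.intervalIntegrable (by fun_prop) _ _]
        simp_rw [intervalIntegral.integral_finsetSum fun n _ => hint _]
    _ = ∑ m ∈ s, ∑ n ∈ s, (∫ t in (-T)..T, exp ((lam m - lam n : ℝ) * I * t)).re := by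
        simp only [re_sum]
    _ ≤ ∑ m ∈ s, ∑ n ∈ s, ((if m = n then 2 * T else 0) + 2 / |lam m - lam n|) := by
        gcongr with m hm n hn
        simpa only [sub_eq_zero, hlam.eq_iff hm hn] using
          re_integral_exp_mul_I_le (lam m - lam n) T
    _ = 2 * T * #s + ∑ m ∈ s, ∑ n ∈ s, 2 / |lam m - lam n| := by
        simp [sum_add_distrib, mul_comm]

lemma rpow_le_rpow_sub_two_mul_sq {x M p : ℝ} (hx : 0 ≤ x) (hxM : x ≤ M) (hp : 2 ≤ p) :
    x ^ p ≤ M ^ (p - 2) * x ^ 2 := by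
  calc x ^ p = x ^ (p - 2) * x ^ (2 : ℝ) := by
        rw [← Real.rpow_add' hx (by linarith), sub_add_cancel]
    _ ≤ M ^ (p - 2) * x ^ (2 : ℝ) := by gcongr
    _ = M ^ (p - 2) * x ^ 2 := by rw [Real.rpow_two]

lemma bNorm_le_of_integral_le {f : ℝ → ℂ} {r B K : ℝ} (hr : 0 ≤ r)
    (hf : ∀ T, 0 < T → ∫ t in (-T)..T, ‖f t‖ ^ r ≤ 2 * T * B + K) :
    bNorm r f ≤ B ^ (1 / r) := by
  set A : ℝ → ℝ := fun T => 1 / (2 * T) * ∫ t in (-T)..T, ‖f t‖ ^ r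
  have hA_nonneg : ∀ᶠ T in atTop, 0 ≤ A T := by
    filter_upwards [eventually_gt_atTop 0] with T hT
    have : 0 ≤ ∫ t in (-T)..T, ‖f t‖ ^ r :=
      intervalIntegral.integral_nonneg (by linarith) fun t _ => by positivity
    positivity
  have hA_le : ∀ᶠ T in atTop, A T ≤ B + K * (2 * T)⁻¹ := by
    filter_upwards [eventually_gt_atTop 0] with T hT
    calc A T ≤ 1 / (2 * T) * (2 * T * B + K) := by
          show 1 / (2 * T) * _ ≤ _
          gcongr
          exact hf T hT
      _ = B + K * (2 * T)⁻¹ := by field_simp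
  have hlim : Tendsto (fun T : ℝ => B + K * (2 * T)⁻¹) atTop (𝓝 B) := by
    simpa using tendsto_const_nhds.add (tendsto_const_nhds.mul
      (tendsto_inv_atTop_zero.comp (tendsto_id.const_mul_atTop (two_pos : (0 : ℝ) < 2))))
  have hlimsup_le : limsup A atTop ≤ B := hlim.limsup_eq ▸
    limsup_le_limsup hA_le (isCoboundedUnder_le_of_eventually_le _ hA_nonneg)
      hlim.isBoundedUnder_le
  have hlimsup_nonneg : 0 ≤ limsup A atTop :=
    le_limsup_of_frequently_le hA_nonneg.frequently (hlim.isBoundedUnder_le.mono_le hA_le)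
  exact Real.rpow_le_rpow hlimsup_nonneg hlimsup_le (by positivity)

lemma bNorm_le_of_norm_le_of_integral_sq_le {f : ℝ → ℂ} (hf : Continuous f) {p M A K : ℝ}
    (hp : 2 ≤ p) (hM : ∀ t, ‖f t‖ ≤ M)
    (hsq : ∀ T, ∫ t in (-T)..T, ‖f t‖ ^ 2 ≤ 2 * T * A + K) :
    bNorm p f ≤ (M ^ (p - 2) * A) ^ (1 / p) := by
  have hM0 : 0 ≤ M := (norm_nonneg _).trans (hM 0)
  refine bNorm_le_of_integral_le (K := M ^ (p - 2) * K) (by linarith)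
    fun T hT => ?_
  have hfp : Continuous fun t => ‖f t‖ ^ p := hf.norm.rpow_const fun _ => Or.inr (by linarith)
  calc ∫ t in (-T)..T, ‖f t‖ ^ p ≤ ∫ t in (-T)..T, M ^ (p - 2) * ‖f t‖ ^ 2 :=
        intervalIntegral.integral_mono_on (by linarith) (hfp.intervalIntegrable _ _)
          ((by fun_prop : Continuous fun t => M ^ (p - 2) * ‖f t‖ ^ 2).intervalIntegrable _ _)
          fun t _ => rpow_le_rpow_sub_two_mul_sq (norm_nonneg _) (hM t) hp
    _ = M ^ (p - 2) * ∫ t in (-T)..T, ‖f t‖ ^ 2 := intervalIntegral.integral_const_mul _ _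
    _ ≤ M ^ (p - 2) * (2 * T * A + K) := by gcongr; exact hsq T
    _ = 2 * T * (M ^ (p - 2) * A) + M ^ (p - 2) * K := by ring

lemma bNorm_sum_exp_le {ι : Type*} (s : Finset ι) {lam : ι → ℝ} (hlam : Set.InjOn lam s)
    {p : ℝ} (hp : 2 ≤ p) :
    bNorm p (fun t => ∑ n ∈ s, exp (-(lam n * t) * I)) ≤ (#s : ℝ) ^ (1 - 1 / p) := by
  have hbound : ∀ t : ℝ, ‖∑ n ∈ s, exp (-(lam n * t) * I)‖ ≤ #s := fun t =>
    (norm_sum_le _ _).trans (by simp [norm_exp])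
  refine (bNorm_le_of_norm_le_of_integral_sq_le (by fun_prop) hp hbound
    (integral_norm_sum_exp_sq_le s hlam)).trans_eq ?_
  rw [← Real.rpow_add_one' (Nat.cast_nonneg _) (by linarith),
    ← Real.rpow_mul (Nat.cast_nonneg _)]
  congr 1
  field_simp
  ring

end BesicovitchNorm

lemma succ_mul_exp_le_sum_exp {lam : ℕ → ℝ} (hlam : Monotone lam) {σ : ℝ} (hσ : 0 ≤ σ)
    (n : ℕ) :
    ((n : ℝ) + 1) * Real.exp (-(lam n * σ)) ≤ ∑ k ∈ range (n + 1), Real.exp (-lam k * σ) := by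
  have hle : ∀ k ∈ range (n + 1), Real.exp (-(lam n * σ)) ≤ Real.exp (-lam k * σ) :=
    fun k hk => by
      have : lam k ≤ lam n := hlam (Nat.lt_succ_iff.mp (mem_range.mp hk))
      gcongr
      nlinarith
  simpa using card_nsmul_le_sum _ _ _ hle

lemma log_le_of_mul_exp_neg_le {N C x p : ℝ} (hN : 0 < N) (hp : 0 < p)
    (h : N * Real.exp (-x) ≤ C * N ^ (1 - 1 / p)) : Real.log N ≤ p * (Real.log C + x) := by
  have hC : 0 < C := pos_of_mul_pos_left ((by positivity : 0 < N * Real.exp (-x)).trans_le h)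
    (by positivity)
  have hlog := Real.log_le_log (by positivity) h
  rw [Real.log_mul hN.ne' (Real.exp_pos _).ne', Real.log_exp,
    Real.log_mul hC.ne' (by positivity), Real.log_rpow hN] at hlog
  have : Real.log N / p ≤ Real.log C + x := by
    have : (1 - 1 / p) * Real.log N = Real.log N - Real.log N / p := by ring
    linarith
  rw [div_le_iff₀ hp] at this
  linarith

lemma limsup_div_le_of_le_add_mul {α : Type*} {l : Filter α} [l.NeBot] {u v : α → ℝ} {a b : ℝ}
    (hv : Tendsto v l atTop) (huv : ∀ᶠ x in l, u x ≤ a + b * v x) :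
    limsup (fun x => ((u x / v x : ℝ) : EReal)) l ≤ (b : EReal) := by
  have hlim : Tendsto (fun x => ((a / v x + b : ℝ) : EReal)) l (𝓝 b) :=
    (continuous_coe_real_ereal.tendsto b).comp (by
      simpa using (tendsto_const_nhds.div_atTop hv).add_const b)
  refine (limsup_le_limsup ?_).trans_eq hlim.limsup_eq
  filter_upwards [huv, hv.eventually_gt_atTop 0] with x hux hvx
  rw [EReal.coe_le_coe_iff]
  calc u x / v x ≤ (a + b * v x) / v x := by gcongr
    _ = a / v x + b := by field_simp

theorem L_le_of_Sp_bound_general (lam : ℕ → ℝ) (h1 : StrictMono lam)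
    (h3 : Tendsto lam atTop atTop) (p : ℝ) (hp : 2 ≤ p) (σ : ℝ) (hσ : 0 < σ)
    (C : ℝ) (hC : 0 < C)
    (h : ∀ (N : ℕ) (a : ℕ → ℂ),
      ∑ n ∈ Finset.range N, ‖a n‖ * Real.exp (-(lam n) * σ) ≤
        C * bNorm p (fun t =>
          ∑ n ∈ Finset.range N, a n * Complex.exp (-(lam n * t) * Complex.I))) :
    Filter.limsup (fun n : ℕ => ((Real.log n / lam n : ℝ) : EReal)) atTop ≤
      ((p * σ : ℝ) : EReal) := by
  have hlog : ∀ n : ℕ, Real.log (n + 1) ≤ p * (Real.log C + lam n * σ) := by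
    intro n
    refine log_le_of_mul_exp_neg_le (by positivity) (by linarith) ?_
    calc ((n : ℝ) + 1) * Real.exp (-(lam n * σ))
        ≤ ∑ k ∈ range (n + 1), Real.exp (-lam k * σ) :=
          succ_mul_exp_le_sum_exp h1.monotone hσ.le n
      _ ≤ C * bNorm p (fun t => ∑ k ∈ range (n + 1), Complex.exp (-(lam k * t) * Complex.I)) :=
          by simpa using h (n + 1) 1
      _ ≤ C * ((n : ℝ) + 1) ^ (1 - 1 / p) := by
          gcongr
          simpa using bNorm_sum_exp_le (range (n + 1)) h1.injective.injOn hp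
  refine limsup_div_le_of_le_add_mul (a := p * Real.log C) h3 ?_
  filter_upwards [eventually_ge_atTop 1] with n hn
  calc Real.log n ≤ Real.log (n + 1) :=
        Real.log_le_log (by exact_mod_cast hn) (by linarith)
    _ ≤ p * (Real.log C + lam n * σ) := hlog n
    _ = p * Real.log C + p * σ * lam n := by ring

/-- If some abscissa `S_p` is finite then `L(λ)` is finite: if
`Σ|a_n|e^{-λ_nσ} ≤ C‖D‖_p` for all Dirichlet polynomials and some `2 ≤ p < ∞`, `σ > 0`,
then `L(λ) ≤ pσ`. -/
theorem L_le_of_Sp_bound (lam : ℕ → ℝ) (h1 : StrictMono lam) (h2 : ∀ n, 0 ≤ lam n)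
    (h3 : Tendsto lam atTop atTop) (p : ℝ) (hp : 2 ≤ p) (σ : ℝ) (hσ : 0 < σ)
    (C : ℝ) (hC : 0 < C)
    (h : ∀ (N : ℕ) (a : ℕ → ℂ),
      ∑ n ∈ Finset.range N, ‖a n‖ * Real.exp (-(lam n) * σ) ≤
        C * bNorm p (fun t =>
          ∑ n ∈ Finset.range N, a n * Complex.exp (-(lam n * t) * Complex.I))) :
    Filter.limsup (fun n : ℕ => ((Real.log n / lam n : ℝ) : EReal)) atTop ≤
      ((p * σ : ℝ) : EReal) :=
  L_le_of_Sp_bound_general lam h1 h3 p hp σ hσ C hC h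
end
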